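/- arXiv:1511.07020 — 3 statements merged into one kernel-verified Lean document; each statement's English description precedes it below -/
import Mathlib

section
/- Suppose x ∈ ℝⁿ satisfies x > 0 componentwise and A x = b. Let W = diag(x₁/c₁,…,xₙ/cₙ), L = A W Aᵀ, and let p be the solution of L p = b. Then ‖Aᵀ p‖_∞ ≤ 𝒟 · C_s, where 𝒟 = max{|det A'| : A' is a square submatrix of A} and C_s = Σᵢ cᵢ. -/
open Matrix Filter Set Topology

/-- The real matrix obtained from an integer matrix by coercion of entries. -/
noncomputable def rmat {m n : ℕ} (A : Matrix (Fin m) (Fin n) ℤ) :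
    Matrix (Fin m) (Fin n) ℝ :=
  A.map (Int.cast : ℤ → ℝ)

/-- The diagonal matrix `W = diag (x i / c i)`. -/
noncomputable def physW {n : ℕ} (c x : Fin n → ℝ) : Matrix (Fin n) (Fin n) ℝ :=
  Matrix.diagonal (fun i => x i / c i)

/-- The Physarum vector `q = W Aᵀ L⁻¹ b` where `L = A W Aᵀ`. -/
noncomputable def physQ {m n : ℕ} (B : Matrix (Fin m) (Fin n) ℝ) (b : Fin m → ℝ)
    (c x : Fin n → ℝ) : Fin n → ℝ :=
  physW c x *ᵥ (Bᵀ *ᵥ ((B * physW c x * Bᵀ)⁻¹ *ᵥ b))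

/-- The set of absolute values of determinants of square submatrices of `A` (as reals). -/
def subdets {m n : ℕ} (A : Matrix (Fin m) (Fin n) ℤ) : Set ℝ :=
  {d | ∃ (k : ℕ) (f : Fin k → Fin m) (g : Fin k → Fin n),
    Function.Injective f ∧ Function.Injective g ∧
    d = |((A.submatrix f g).det : ℝ)|}

/-- `x` is a solution of the Physarum dynamics `ẋ = q - x` on the time set `s`,
staying in the positive orthant. -/
def IsPhysSolOn {m n : ℕ} (B : Matrix (Fin m) (Fin n) ℝ) (b : Fin m → ℝ)
    (c : Fin n → ℝ) (x : ℝ → Fin n → ℝ) (s : Set ℝ) : Prop :=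
  ∀ t ∈ s, (∀ i, 0 < x t i) ∧ HasDerivWithinAt x (physQ B b c (x t) - x t) s t

/-! Since `x = W c`, we have `Aᵀ p = Aᵀ L⁻¹ A W c`, so it suffices to bound every entry of
`M = Aᵀ L⁻¹ A W` by `𝒟`. Let `U_k` be `A` with the unit row `e_kᵀ` appended. By the Schur
complement, `det (U_j W U_iᵀ) = det L * (δ_ji w_i - w_j M_ji)`, while by Cauchy–Binet it is
`∑_S w_S det U_j[S] det U_i[S]`. Every maximal minor of `U_i` is, up to sign, a minor of `A`, and
the minors of `U_j` are integers, so `|det (U_j W U_iᵀ)| ≤ 𝒟 det (U_j W U_jᵀ) ≤ 𝒟 w_j det L`, the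
last step because `M_jj ≥ 0` (`L⁻¹` is positive definite). This gives `|M_ji| ≤ 𝒟` for `i ≠ j`,
and `0 ≤ M_jj ≤ 1 ≤ 𝒟`. -/

theorem Int.abs_cast_mul_le_mul_self (a : ℤ) {b D : ℝ} (hb : |b| ≤ D) :
    |(a : ℝ) * b| ≤ D * ((a : ℝ) * a) := by
  rcases eq_or_ne a 0 with rfl | ha
  · simp
  have h1 : (1 : ℝ) ≤ |(a : ℝ)| := by exact_mod_cast Int.one_le_abs ha
  rw [abs_mul, ← abs_mul_abs_self (a : ℝ)]
  nlinarith [mul_le_mul_of_nonneg_left hb (abs_nonneg (a : ℝ)),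
    mul_nonneg (mul_nonneg (sub_nonneg.2 h1) (abs_nonneg (a : ℝ))) ((abs_nonneg b).trans hb)]

namespace Matrix

section CauchyBinet

variable {R : Type*} [CommRing R] {ι κ : Type*} [Fintype ι] [DecidableEq ι]

theorem det_mul_eq_sum_prod_mul_det [Fintype κ] (P : Matrix ι κ R) (Q : Matrix κ ι R) :
    (P * Q).det = ∑ r : ι → κ, (∏ i, P i (r i)) * (Q.submatrix r id).det := by
  have hmul : P * Q = Matrix.of fun i => ∑ k, P i k • Q k := by
    ext i l
    simp [mul_apply, Finset.sum_apply]
  have hrows : (P * Q).det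
      = (detRowAlternating : (ι → R) [⋀^ι]→ₗ[R] R).toMultilinearMap
          fun i => ∑ k, P i k • Q k := by
    rw [hmul]
    rfl
  rw [hrows, MultilinearMap.map_sum]
  refine Finset.sum_congr rfl fun r _ => ?_
  rw [MultilinearMap.map_smul_univ]
  rfl

theorem sum_perm_prod_mul_det_submatrix (P : Matrix ι κ R) (Q : Matrix κ ι R) (r : ι → κ) :
    ∑ σ : Equiv.Perm ι, (∏ i, P i (r (σ i))) * (Q.submatrix (r ∘ σ) id).det
      = (P.submatrix id r).det * (Q.submatrix r id).det := by
  have hQ : ∀ σ : Equiv.Perm ι, (Q.submatrix (r ∘ σ) id).det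
      = Equiv.Perm.sign σ * (Q.submatrix r id).det := fun σ => by
    rw [← det_permute, submatrix_submatrix]; rfl
  rw [← det_transpose, det_apply, Finset.sum_mul]
  refine Finset.sum_congr rfl fun σ _ => ?_
  rw [hQ, Units.smul_def, zsmul_eq_mul]
  simp only [transpose_apply, submatrix_apply, id_eq]
  ring

/-- Cauchy–Binet, summed over all (not only increasing) column selections `r`; the
non-injective ones contribute zero and each column set is counted `(card ι)!` times. -/
theorem factorial_card_mul_det_mul [Fintype κ] [DecidableEq κ] (P : Matrix ι κ R)
    (Q : Matrix κ ι R) :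
    ((Fintype.card ι).factorial : R) * (P * Q).det
      = ∑ r : ι → κ, (P.submatrix id r).det * (Q.submatrix r id).det := by
  have hperm : ∀ σ : Equiv.Perm ι, (P * Q).det
      = ∑ r : ι → κ, (∏ i, P i (r (σ i))) * (Q.submatrix (r ∘ σ) id).det := fun σ => by
    rw [det_mul_eq_sum_prod_mul_det]
    exact ((σ.symm.arrowCongr (Equiv.refl κ)).sum_comp _).symm
  calc ((Fintype.card ι).factorial : R) * (P * Q).det
      = ∑ σ : Equiv.Perm ι, (P * Q).det := by
        rw [Finset.sum_const, Finset.card_univ, Fintype.card_perm, nsmul_eq_mul]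
    _ = ∑ r : ι → κ, ∑ σ : Equiv.Perm ι,
          (∏ i, P i (r (σ i))) * (Q.submatrix (r ∘ σ) id).det := by
        rw [Finset.sum_comm]
        exact Finset.sum_congr rfl fun σ _ => hperm σ
    _ = ∑ r : ι → κ, (P.submatrix id r).det * (Q.submatrix r id).det :=
        Finset.sum_congr rfl fun r _ => sum_perm_prod_mul_det_submatrix P Q r

end CauchyBinet

section IntegerGram

variable {ι κ : Type*} [Fintype ι] [DecidableEq ι] [Fintype κ] [DecidableEq κ]

theorem det_submatrix_map_intCast_mul_diagonal (X : Matrix ι κ ℤ) (w : κ → ℝ) (r : ι → κ) :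
    ((X.map (Int.cast : ℤ → ℝ) * diagonal w).submatrix id r).det
      = (∏ a, w (r a)) * (X.submatrix id r).det := by
  have : (X.map (Int.cast : ℤ → ℝ) * diagonal w).submatrix id r
      = (X.submatrix id r).map (Int.cast : ℤ → ℝ) * diagonal (w ∘ r) := by
    ext a b
    simp [mul_diagonal]
  rw [this, det_mul, det_diagonal, mul_comm, Int.cast_det]
  rfl

omit [Fintype κ] [DecidableEq κ] in
theorem det_transpose_submatrix_map_intCast (X : Matrix ι κ ℤ) (r : ι → κ) :
    ((X.map (Int.cast : ℤ → ℝ))ᵀ.submatrix r id).det = (X.submatrix id r).det := by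
  rw [← transpose_submatrix, det_transpose, Int.cast_det]
  rfl

/-- Each Cauchy–Binet term of `det (U W Vᵀ)` is dominated by `D` times the corresponding term
of `det (U W Uᵀ)`, because a nonzero integer minor of `U` has absolute value at least one. -/
theorem abs_det_map_mul_diagonal_mul_transpose_le (U V : Matrix ι κ ℤ) {w : κ → ℝ}
    (hw : 0 ≤ w) {D : ℝ} (hV : ∀ r : ι → κ, |((V.submatrix id r).det : ℝ)| ≤ D) :
    |(U.map (Int.cast : ℤ → ℝ) * diagonal w * (V.map (Int.cast : ℤ → ℝ))ᵀ).det|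
      ≤ D * (U.map (Int.cast : ℤ → ℝ) * diagonal w * (U.map (Int.cast : ℤ → ℝ))ᵀ).det := by
  have hcb := fun X : Matrix ι κ ℤ =>
    factorial_card_mul_det_mul (U.map (Int.cast : ℤ → ℝ) * diagonal w) (X.map Int.cast)ᵀ
  simp only [det_submatrix_map_intCast_mul_diagonal, det_transpose_submatrix_map_intCast] at hcb
  have hw' : ∀ r : ι → κ, 0 ≤ ∏ a, w (r a) := fun r => Finset.prod_nonneg fun a _ => hw (r a)
  have hk : (0 : ℝ) < (Fintype.card ι).factorial := by positivity
  refine le_of_mul_le_mul_left ?_ hk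
  calc ((Fintype.card ι).factorial : ℝ)
        * |(U.map (Int.cast : ℤ → ℝ) * diagonal w * (V.map (Int.cast : ℤ → ℝ))ᵀ).det|
      = |∑ r : ι → κ, (∏ a, w (r a))
          * (((U.submatrix id r).det : ℝ) * (V.submatrix id r).det)| := by
        rw [← abs_of_pos hk, ← abs_mul, hcb V]
        simp only [mul_assoc]
    _ ≤ ∑ r : ι → κ, (∏ a, w (r a))
          * (D * (((U.submatrix id r).det : ℝ) * (U.submatrix id r).det)) := by
        refine (Finset.abs_sum_le_sum_abs _ _).trans (Finset.sum_le_sum fun r _ => ?_)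
        rw [abs_mul, abs_of_nonneg (hw' r)]
        exact mul_le_mul_of_nonneg_left (Int.abs_cast_mul_le_mul_self _ (hV r)) (hw' r)
    _ = (Fintype.card ι).factorial
          * (D * (U.map (Int.cast : ℤ → ℝ) * diagonal w * (U.map (Int.cast : ℤ → ℝ))ᵀ).det) := by
        rw [mul_left_comm, hcb U, Finset.mul_sum]
        exact Finset.sum_congr rfl fun r _ => by ring

end IntegerGram

theorem posDef_mul_diagonal_mul_transpose {ι κ : Type*} [Fintype ι] [DecidableEq ι] [Fintype κ]
    [DecidableEq κ] {B : Matrix ι κ ℝ} (hB : B.rank = Fintype.card ι) {w : κ → ℝ}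
    (hw : ∀ k, 0 < w k) : (B * diagonal w * Bᵀ).PosDef := by
  have hrows : Function.Injective fun v => v ᵥ* B :=
    vecMul_injective_iff.mpr <| linearIndependent_iff_card_eq_finrank_span.mpr <| by
      rw [← hB, rank_eq_finrank_span_row]
      rfl
  simpa using (posDef_diagonal_iff.mpr hw).mul_mul_conjTranspose_same hrows

theorem transpose_mul_inv_mul_mul_diagonal_apply_self_nonneg {ι κ : Type*} [Fintype ι]
    [DecidableEq ι] [Fintype κ] [DecidableEq κ] {B : Matrix ι κ ℝ} {w : κ → ℝ}
    (hL : (B * diagonal w * Bᵀ).PosDef) (hw : 0 ≤ w) (j : κ) :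
    0 ≤ (Bᵀ * (B * diagonal w * Bᵀ)⁻¹ * B * diagonal w) j j := by
  have := (hL.inv.posSemidef.conjTranspose_mul_mul_same B).diag_nonneg (i := j)
  rw [mul_diagonal]
  exact mul_nonneg (by simpa using this) (hw j)

theorem abs_mulVec_apply_le_mul_sum {ι κ : Type*} [Fintype κ] {M : Matrix ι κ ℝ} {v : κ → ℝ}
    {D : ℝ} {j : ι} (hM : ∀ i, |M j i| ≤ D) (hv : ∀ i, 0 ≤ v i) :
    |(M *ᵥ v) j| ≤ D * ∑ i, v i :=
  calc |(M *ᵥ v) j| ≤ ∑ i, |M j i * v i| := Finset.abs_sum_le_sum_abs _ _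
    _ ≤ ∑ i, D * v i := Finset.sum_le_sum fun i _ => by
        rw [abs_mul, abs_of_nonneg (hv i)]
        exact mul_le_mul_of_nonneg_right (hM i) (hv i)
    _ = D * ∑ i, v i := Finset.mul_sum _ _ _ |>.symm

section BasisRow

variable {ι κ R : Type*} [DecidableEq κ]

def appendBasisRow [Zero R] [One R] (B : Matrix ι κ R) (j : κ) : Matrix (ι ⊕ Unit) κ R :=
  fromRows B (replicateRow Unit (Pi.single j 1))

theorem map_appendBasisRow {S : Type*} [Zero R] [One R] [Zero S] [One S] (B : Matrix ι κ R)
    (j : κ) (f : R → S) (h0 : f 0 = 0) (h1 : f 1 = 1) :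
    (appendBasisRow B j).map f = appendBasisRow (B.map f) j := by
  ext (a | a) l
  · rfl
  · by_cases hl : l = j
    · subst hl; simp [appendBasisRow, h1]
    · simp [appendBasisRow, hl, h0]

variable [Fintype ι] [DecidableEq ι] [Fintype κ] {K : Type*} [Field K]

/-- Schur complement with respect to the block `B W Bᵀ`. -/
theorem det_appendBasisRow_mul_mul_transpose (B : Matrix ι κ K) (W : Matrix κ κ K)
    (hL : IsUnit (B * W * Bᵀ).det) (j i : κ) :
    (appendBasisRow B j * W * (appendBasisRow B i)ᵀ).det
      = (B * W * Bᵀ).det * (W - W * Bᵀ * (B * W * Bᵀ)⁻¹ * B * W) j i := by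
  have := (B * W * Bᵀ).invertibleOfIsUnitDet hL
  rw [appendBasisRow, appendBasisRow, fromRows_mul, transpose_fromRows, fromRows_mul_fromCols,
    det_fromBlocks₁₁, det_unique (n := Unit), invOf_eq_nonsing_inv]
  simp [mul_apply, Pi.single_apply, sub_apply, Matrix.mul_assoc]

theorem det_appendBasisRow_mul_diagonal_mul_transpose (B : Matrix ι κ K) (w : κ → K)
    (hL : IsUnit (B * diagonal w * Bᵀ).det) (j i : κ) :
    (appendBasisRow B j * diagonal w * (appendBasisRow B i)ᵀ).det
      = (B * diagonal w * Bᵀ).det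
        * (diagonal w j i - w j * (Bᵀ * (B * diagonal w * Bᵀ)⁻¹ * B * diagonal w) j i) := by
  rw [det_appendBasisRow_mul_mul_transpose B _ hL, sub_apply, ← diagonal_mul]
  simp only [Matrix.mul_assoc]

end BasisRow

end Matrix

section Subdeterminants

variable {m n : ℕ} {A : Matrix (Fin m) (Fin n) ℤ} {𝒟 : ℝ}

theorem one_mem_subdets (A : Matrix (Fin m) (Fin n) ℤ) : (1 : ℝ) ∈ subdets A :=
  ⟨0, Fin.elim0, Fin.elim0, fun a => a.elim0, fun a => a.elim0, by simp⟩

theorem one_le_of_mem_upperBounds_subdets (hD : 𝒟 ∈ upperBounds (subdets A)) : 1 ≤ 𝒟 :=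
  hD (one_mem_subdets A)

/-- Moving the column that meets the basis row to the last position makes the minor block
triangular, with an ordinary `m × m` minor of `A` as its upper-left block. -/
theorem abs_det_submatrix_appendBasisRow_le (hD : 𝒟 ∈ upperBounds (subdets A)) (i : Fin n)
    (r : Fin m ⊕ Unit → Fin n) :
    |(((A.appendBasisRow i).submatrix id r).det : ℝ)| ≤ 𝒟 := by
  have hD0 : 0 ≤ 𝒟 := zero_le_one.trans (one_le_of_mem_upperBounds_subdets hD)
  by_cases hr : Function.Injective r
  swap
  · obtain ⟨a, b, hab, hne⟩ := Function.not_injective_iff.mp hr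
    rwa [det_zero_of_column_eq hne fun k => by simp [hab], Int.cast_zero, abs_zero]
  by_cases hi : ∃ l, r l = i
  swap
  · push Not at hi
    rw [det_eq_zero_of_row_eq_zero (Sum.inr ()) fun l => by
      simp [appendBasisRow, hi l], Int.cast_zero, abs_zero]
    exact hD0
  obtain ⟨l₀, hl₀⟩ := hi
  set σ := Equiv.swap l₀ (Sum.inr ())
  have hblocks : (A.appendBasisRow i).submatrix id (r ∘ σ)
      = fromBlocks (A.submatrix id (r ∘ σ ∘ Sum.inl))
          (((A.appendBasisRow i).submatrix id (r ∘ σ)).toBlocks₁₂) 0 1 := by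
    ext (a | a) (b | b)
    · rfl
    · rfl
    · have hb : r (σ (Sum.inl b)) ≠ i := hl₀ ▸ hr.ne fun h =>
        Sum.inl_ne_inr (a := b) (b := ()) <| by simpa [σ] using congrArg σ h
      simp [appendBasisRow, hb]
    · simp [appendBasisRow, σ, hl₀]
  have hmem : |((A.submatrix id (r ∘ σ ∘ Sum.inl)).det : ℝ)| ∈ subdets A :=
    ⟨m, id, r ∘ σ ∘ Sum.inl, Function.injective_id,
      (hr.comp σ.injective).comp Sum.inl_injective, rfl⟩
  have hperm := det_permute' σ ((A.appendBasisRow i).submatrix id r)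
  rw [submatrix_submatrix, Function.id_comp, hblocks, det_fromBlocks_zero₂₁, det_one, mul_one]
    at hperm
  have hdet : |((A.appendBasisRow i).submatrix id r).det|
      = |(A.submatrix id (r ∘ σ ∘ Sum.inl)).det| := by
    rw [hperm, abs_mul, Int.cast_id, Equiv.Perm.sign_abs, one_mul]
  rw [← Int.cast_abs, hdet, Int.cast_abs]
  exact hD hmem

theorem abs_transpose_mul_inv_mul_mul_diagonal_apply_le (hrank : (rmat A).rank = m)
    (hD : 𝒟 ∈ upperBounds (subdets A)) {w : Fin n → ℝ} (hw : ∀ k, 0 < w k) (j i : Fin n) :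
    |((rmat A)ᵀ * (rmat A * diagonal w * (rmat A)ᵀ)⁻¹ * rmat A * diagonal w) j i| ≤ 𝒟 := by
  set B := rmat A
  set L := B * diagonal w * Bᵀ
  set M := Bᵀ * L⁻¹ * B * diagonal w
  have hL : L.PosDef := posDef_mul_diagonal_mul_transpose (by simpa using hrank) hw
  have hgram := det_appendBasisRow_mul_diagonal_mul_transpose B w hL.det_pos.ne'.isUnit j
  have hU : ∀ k, (A.appendBasisRow k).map (Int.cast : ℤ → ℝ) = B.appendBasisRow k :=
    fun k => map_appendBasisRow A k _ Int.cast_zero Int.cast_one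
  have hdom : ∀ k, |L.det * (diagonal w j k - w j * M j k)|
      ≤ 𝒟 * (L.det * (w j - w j * M j j)) := fun k => by
    have := abs_det_map_mul_diagonal_mul_transpose_le (A.appendBasisRow j) (A.appendBasisRow k)
      (fun l => (hw l).le) (abs_det_submatrix_appendBasisRow_le hD k)
    rwa [hU, hU, hgram, hgram, diagonal_apply_eq] at this
  have hMjj : 0 ≤ M j j :=
    transpose_mul_inv_mul_mul_diagonal_apply_self_nonneg hL (fun k => (hw k).le) j
  have hD1 := one_le_of_mem_upperBounds_subdets hD
  have hc : 0 < L.det * w j := mul_pos hL.det_pos (hw j)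
  have hgram_nonneg : 0 ≤ L.det * (w j - w j * M j j) := by
    have hjj := hdom j
    rw [diagonal_apply_eq] at hjj
    nlinarith [abs_nonneg (L.det * (w j - w j * M j j))]
  rcases eq_or_ne i j with rfl | hij
  · have hMii : M i i ≤ 1 := by nlinarith
    rw [abs_of_nonneg hMjj]
    linarith
  · have hi := hdom i
    rw [diagonal_apply_ne _ hij.symm, zero_sub, mul_neg, abs_neg, ← mul_assoc, abs_mul,
      abs_of_pos hc] at hi
    refine le_of_mul_le_mul_left ?_ hc
    calc L.det * w j * |M j i| ≤ 𝒟 * (L.det * (w j - w j * M j j)) := hi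
      _ ≤ L.det * w j * 𝒟 := by
        nlinarith [mul_nonneg (mul_nonneg hc.le hMjj) (zero_le_one.trans hD1)]

end Subdeterminants

theorem subdet_bound_feasible_point {m n : ℕ} (A : Matrix (Fin m) (Fin n) ℤ)
    (hrank : (rmat A).rank = m)
    (𝒟 : ℝ) (hD : IsGreatest (subdets A) 𝒟)
    (b : Fin m → ℤ) (c : Fin n → ℤ) (hc : ∀ i, 0 < c i)
    (x : Fin n → ℝ) (hx : ∀ i, 0 < x i)
    (hfeas : rmat A *ᵥ x = fun j => (b j : ℝ))
    (p : Fin m → ℝ)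
    (hp : (rmat A * physW (fun i => (c i : ℝ)) x * (rmat A)ᵀ) *ᵥ p = fun j => (b j : ℝ)) :
    ∀ j, |((rmat A)ᵀ *ᵥ p) j| ≤ 𝒟 * ∑ i, (c i : ℝ) := by
  intro j
  set B := rmat A
  set w : Fin n → ℝ := fun i => x i / c i
  have hcpos : ∀ i, (0 : ℝ) < c i := fun i => Int.cast_pos.mpr (hc i)
  have hw : ∀ i, 0 < w i := fun i => div_pos (hx i) (hcpos i)
  have hL := posDef_mul_diagonal_mul_transpose (B := B) (by simpa using hrank) hw
  have := (B * diagonal w * Bᵀ).invertibleOfIsUnitDet hL.det_pos.ne'.isUnit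
  have hxWc : x = diagonal w *ᵥ fun i => (c i : ℝ) := by
    ext i
    simp [w, mulVec_diagonal, div_mul_cancel₀ _ (hcpos i).ne']
  have hpL : p = (B * diagonal w * Bᵀ)⁻¹ *ᵥ (B *ᵥ (diagonal w *ᵥ fun i => (c i : ℝ))) :=
    (inv_mulVec_eq_vec (by rw [← hxWc, hfeas, ← hp]; rfl)).symm
  rw [hpL, mulVec_mulVec, mulVec_mulVec, mulVec_mulVec]
  exact abs_mulVec_apply_le_mul_sum
    (abs_transpose_mul_inv_mul_mul_diagonal_apply_le hrank hD.2 hw j) fun i => (hcpos i).le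
end

section
/- Suppose y ∈ ℝⁿ is feasible, i.e., A y = b and y ≥ 0. Then for every x ∈ ℝⁿ with x > 0 componentwise, the vector q = W Aᵀ L⁻¹ b (where W = diag(x₁/c₁,…,xₙ/cₙ) and L = A W Aᵀ) satisfies ‖q‖_∞ ≤ 𝒟 · ‖y‖₁, where 𝒟 = max{|det A'| : A' is a square submatrix of A}. -/
/-!
Write `L = B W Bᵀ` with `W = diag w ≥ 0`. Summing over all column selections `f : Fin m → Fin n`
(so that every basis is counted `m!` times), Cauchy–Binet gives `m! det L = ∑_f w_f (det B_f)²`,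
and Cramer's rule followed by Cauchy–Binet gives
`m! w_i (Bᵀ (adj L) B)_{ij} = ∑_f w_f det B_f det B_{f[c ↦ j]}`, where `f c = i`.
Minors of an integer matrix satisfy `|d| ≤ d²` and are bounded by `𝒟`, so every entry of
`W Bᵀ L⁻¹ B` is at most `𝒟` in absolute value, and `q = W Bᵀ L⁻¹ B y` since `B y = b`.
If `L` is singular, then `L⁻¹ = 0` in Mathlib and `q = 0`.
-/

open Matrix Filter Set Topology

open Finset Equiv

namespace Matrix

variable {ι κ : Type*}

theorem updateCol_submatrix_eq_submatrix_update {α : Type*} [DecidableEq ι] [DecidableEq κ]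
    (B : Matrix ι κ α) (f : ι → κ) (c : ι) (j : κ) :
    (B.submatrix id f).updateCol c (fun a => B a j) = B.submatrix id (Function.update f c j) := by
  ext a b
  by_cases hb : b = c
  · subst hb; simp
  · simp [hb]

section CommRing

variable {R : Type*} [CommRing R] [Fintype ι] [DecidableEq ι]

theorem det_mul_transpose_eq_sum [Fintype κ] (M N : Matrix ι κ R) :
    det (M * Nᵀ) = ∑ f : ι → κ, (∏ a, N a (f a)) * det (M.submatrix id f) := by
  simp only [det_apply', mul_apply, transpose_apply, prod_univ_sum, Fintype.piFinset_univ,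
    mul_sum, prod_mul_distrib, submatrix_apply, id]
  rw [sum_comm]
  exact sum_congr rfl fun f _ => sum_congr rfl fun σ _ => by ring

theorem det_submatrix_comp_perm (M : Matrix ι κ R) (f : ι → κ) (σ : Perm ι) :
    det (M.submatrix id (f ∘ σ)) = Perm.sign σ * det (M.submatrix id f) := by
  rw [← det_permute' σ (M.submatrix id f), submatrix_submatrix]
  rfl

theorem sum_sign_mul_prod_eq_det_submatrix (N : Matrix ι κ R) (f : ι → κ) :
    ∑ σ : Perm ι, (Perm.sign σ : R) * ∏ a, N a (f (σ a)) = det (N.submatrix id f) := by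
  rw [← det_transpose, det_apply']
  simp [submatrix_apply]

theorem factorial_card_mul_det_mul_transpose [Fintype κ] (M N : Matrix ι κ R) :
    ((Fintype.card ι).factorial : R) * det (M * Nᵀ)
      = ∑ f : ι → κ, det (M.submatrix id f) * det (N.submatrix id f) := by
  have hreindex (σ : Perm ι) : det (M * Nᵀ)
      = ∑ f : ι → κ, (∏ a, N a (f (σ a))) * (Perm.sign σ * det (M.submatrix id f)) := by
    rw [det_mul_transpose_eq_sum]
    refine (Fintype.sum_equiv (σ.symm.arrowCongr (Equiv.refl κ)) _ _ fun f => ?_).symm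
    rw [← det_submatrix_comp_perm]
    rfl
  calc ((Fintype.card ι).factorial : R) * det (M * Nᵀ)
      = ∑ σ : Perm ι, det (M * Nᵀ) := by simp [Fintype.card_perm]
    _ = ∑ f : ι → κ, det (M.submatrix id f) * det (N.submatrix id f) := by
      rw [sum_congr rfl fun σ _ => hreindex σ, sum_comm]
      refine sum_congr rfl fun f _ => ?_
      rw [← sum_sign_mul_prod_eq_det_submatrix N f, mul_sum]
      exact sum_congr rfl fun σ _ => by ring

theorem dotProduct_adjugate_mulVec_eq_sum_updateCol (X : Matrix ι ι R) (u v : ι → R) :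
    u ⬝ᵥ (adjugate X *ᵥ v) = ∑ a, u a * det (X.updateCol a v) := by
  simp [← cramer_eq_adjugate_mulVec, cramer_apply, dotProduct]

theorem dotProduct_adjugate_mulVec_eq_sum_updateRow (X : Matrix ι ι R) (u v : ι → R) :
    u ⬝ᵥ (adjugate X *ᵥ v) = ∑ a, v a * det (X.updateRow a u) := by
  rw [dotProduct_comm, ← vecMul_transpose, ← dotProduct_mulVec,
    adjugate_transpose, dotProduct_adjugate_mulVec_eq_sum_updateCol]
  simp only [updateCol_transpose, det_transpose]

theorem det_submatrix_mul_diagonal [Fintype κ] [DecidableEq κ] (B : Matrix ι κ R) (w : κ → R)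
    (f : ι → κ) :
    det ((B * diagonal w).submatrix id f) = (∏ a, w (f a)) * det (B.submatrix id f) := by
  have : (B * diagonal w).submatrix id f = B.submatrix id f * diagonal (w ∘ f) := by
    ext a b
    simp
  rw [this, det_mul, det_diagonal, mul_comm]
  rfl

theorem det_submatrix_eq_zero_of_not_injective (B : Matrix ι κ R) {f : ι → κ}
    (hf : ¬ Function.Injective f) : det (B.submatrix id f) = 0 := by
  obtain ⟨a, b, hab, hne⟩ := Function.not_injective_iff.mp hf
  exact det_zero_of_column_eq hne fun k => by simp [hab]

variable [Fintype κ] [DecidableEq κ]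

theorem factorial_card_mul_det_mul_diagonal_mul_transpose (B : Matrix ι κ R) (w : κ → R) :
    ((Fintype.card ι).factorial : R) * det (B * diagonal w * Bᵀ)
      = ∑ f : ι → κ, (∏ a, w (f a)) * det (B.submatrix id f) ^ 2 := by
  rw [factorial_card_mul_det_mul_transpose]
  exact sum_congr rfl fun f _ => by rw [det_submatrix_mul_diagonal]; ring

theorem factorial_card_mul_weighted_adjugate (B : Matrix ι κ R) (w : κ → R) (i j : κ) :
    ((Fintype.card ι).factorial : R) * (w i * (Bᵀ * adjugate (B * diagonal w * Bᵀ) * B) i j)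
      = ∑ f : ι → κ, (∏ a, w (f a)) * det (B.submatrix id f) *
          ∑ c with f c = i, det (B.submatrix id (Function.update f c j)) := by
  set L := B * diagonal w * Bᵀ
  have hrow (a : ι) : L.updateRow a (fun b => w i * B b i)
      = B.updateRow a (Pi.single i 1) * diagonal w * Bᵀ := by
    rw [updateRow_mul, updateRow_mul]
    congr 1
    ext b
    simp [vecMul, dotProduct, Pi.single_apply, diagonal_apply]
  have hentry : w i * (Bᵀ * adjugate L * B) i j
      = ∑ a, B a j * det (L.updateRow a (fun b => w i * B b i)) := by
    rw [← dotProduct_adjugate_mulVec_eq_sum_updateRow]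
    simp only [mul_apply, mulVec, dotProduct, transpose_apply, mul_sum, sum_mul]
    rw [sum_comm]
    exact sum_congr rfl fun a _ => sum_congr rfl fun b _ => by ring
  have hsub (a : ι) (f : ι → κ) : (B.updateRow a (Pi.single i 1)).submatrix id f
      = (B.submatrix id f).updateRow a (fun c => (Pi.single i 1 : κ → R) (f c)) := by
    ext b c
    by_cases hb : b = a
    · subst hb; simp
    · simp [hb]
  have hinner (f : ι → κ) :
      ∑ a, B a j * det ((B.submatrix id f).updateRow a (fun c => (Pi.single i 1 : κ → R) (f c)))
        = ∑ c with f c = i, det (B.submatrix id (Function.update f c j)) := by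
    rw [← dotProduct_adjugate_mulVec_eq_sum_updateRow, dotProduct_adjugate_mulVec_eq_sum_updateCol,
      sum_filter]
    refine sum_congr rfl fun c _ => ?_
    rw [updateCol_submatrix_eq_submatrix_update]
    by_cases hc : f c = i <;> simp [hc]
  calc ((Fintype.card ι).factorial : R) * (w i * (Bᵀ * adjugate L * B) i j)
      = ∑ a, B a j * ∑ f : ι → κ, (∏ a, w (f a)) * det (B.submatrix id f)
          * det ((B.submatrix id f).updateRow a (fun c => (Pi.single i 1 : κ → R) (f c))) := by
        rw [hentry, mul_sum]
        refine sum_congr rfl fun a _ => ?_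
        rw [mul_left_comm, hrow, factorial_card_mul_det_mul_transpose]
        congr 1
        refine sum_congr rfl fun f _ => ?_
        rw [det_submatrix_mul_diagonal, hsub]
        ring
    _ = ∑ f : ι → κ, (∏ a, w (f a)) * det (B.submatrix id f) *
          ∑ a, B a j * det ((B.submatrix id f).updateRow a
            (fun c => (Pi.single i 1 : κ → R) (f c))) := by
        simp_rw [mul_sum]
        rw [sum_comm]
        exact sum_congr rfl fun f _ => sum_congr rfl fun a _ => by ring
    _ = _ := sum_congr rfl fun f _ => by rw [hinner]

end CommRing

section Ordered

variable {R : Type*} [CommRing R] [LinearOrder R] [IsStrictOrderedRing R]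
  [Fintype ι] [DecidableEq ι]

theorem abs_det_mul_sum_det_update_le [DecidableEq κ] (B : Matrix ι κ R) {D : R}
    (hD : ∀ g : ι → κ, |det (B.submatrix id g)| ≤ D) (f : ι → κ) (i j : κ) :
    |det (B.submatrix id f) * ∑ c with f c = i, det (B.submatrix id (Function.update f c j))|
      ≤ |det (B.submatrix id f)| * D := by
  by_cases hf : Function.Injective f
  · have hcard : #{c | f c = i} ≤ 1 :=
      card_le_one.mpr fun a ha b hb => hf (by simp_all)
    have hD0 : 0 ≤ D := (abs_nonneg _).trans (hD f)
    rw [abs_mul]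
    refine mul_le_mul_of_nonneg_left ?_ (abs_nonneg _)
    calc |∑ c with f c = i, det (B.submatrix id (Function.update f c j))|
        ≤ ∑ c with f c = i, |det (B.submatrix id (Function.update f c j))| :=
          abs_sum_le_sum_abs _ _
      _ ≤ #{c | f c = i} • D := sum_le_card_nsmul _ _ _ fun c _ => hD _
      _ ≤ D := by
          rw [nsmul_eq_mul]
          exact mul_le_of_le_one_left hD0 (by exact_mod_cast hcard)
  · simp [det_submatrix_eq_zero_of_not_injective B hf]

variable [Fintype κ] [DecidableEq κ]

theorem det_mul_diagonal_mul_transpose_nonneg (B : Matrix ι κ R) {w : κ → R}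
    (hw : ∀ k, 0 ≤ w k) : 0 ≤ det (B * diagonal w * Bᵀ) := by
  have h := factorial_card_mul_det_mul_diagonal_mul_transpose B w
  refine nonneg_of_mul_nonneg_right (a := ((Fintype.card ι).factorial : R)) ?_ (by positivity)
  rw [h]
  exact sum_nonneg fun f _ => mul_nonneg (prod_nonneg fun a _ => hw _) (sq_nonneg _)

theorem abs_weighted_adjugate_le (B : Matrix ι κ R) {w : κ → R} (hw : ∀ k, 0 ≤ w k) {D : R}
    (hD : ∀ g : ι → κ, |det (B.submatrix id g)| ≤ D)
    (hsq : ∀ g : ι → κ, |det (B.submatrix id g)| ≤ det (B.submatrix id g) ^ 2) (i j : κ) :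
    |w i * (Bᵀ * adjugate (B * diagonal w * Bᵀ) * B) i j|
      ≤ D * det (B * diagonal w * Bᵀ) := by
  have hfact : (0 : R) < (Fintype.card ι).factorial := by positivity
  refine le_of_mul_le_mul_left ?_ hfact
  rw [← abs_of_pos hfact, ← abs_mul, abs_of_pos hfact, factorial_card_mul_weighted_adjugate,
    mul_left_comm, factorial_card_mul_det_mul_diagonal_mul_transpose, mul_sum]
  refine (abs_sum_le_sum_abs _ _).trans (sum_le_sum fun f _ => ?_)
  have hwf : 0 ≤ ∏ a, w (f a) := prod_nonneg fun a _ => hw _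
  have hD0 : 0 ≤ D := (abs_nonneg _).trans (hD f)
  calc |(∏ a, w (f a)) * det (B.submatrix id f) *
          ∑ c with f c = i, det (B.submatrix id (Function.update f c j))|
      ≤ (∏ a, w (f a)) * (|det (B.submatrix id f)| * D) := by
        rw [mul_assoc, abs_mul, abs_of_nonneg hwf]
        exact mul_le_mul_of_nonneg_left (abs_det_mul_sum_det_update_le B hD f i j) hwf
    _ ≤ D * ((∏ a, w (f a)) * det (B.submatrix id f) ^ 2) := by
        linarith [mul_le_mul_of_nonneg_left (hsq f) (mul_nonneg hwf hD0)]

end Ordered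

section Field

variable {K : Type*} [Field K] [Fintype ι] [DecidableEq ι] [Fintype κ] [DecidableEq κ]

theorem diagonal_mulVec_transpose_mulVec_inv_mulVec_apply (B : Matrix ι κ K) (w y : κ → K)
    (i : κ) :
    (diagonal w *ᵥ (Bᵀ *ᵥ ((B * diagonal w * Bᵀ)⁻¹ *ᵥ (B *ᵥ y)))) i
      = (det (B * diagonal w * Bᵀ))⁻¹
          * ∑ j, w i * (Bᵀ * adjugate (B * diagonal w * Bᵀ) * B) i j * y j := by
  rw [inv_def, Ring.inverse_eq_inv', smul_mulVec, mulVec_smul, mulVec_smul, Pi.smul_apply,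
    smul_eq_mul, mulVec_mulVec, mulVec_mulVec, mulVec_mulVec]
  simp only [mulVec, dotProduct, Matrix.mul_assoc, diagonal_mul, mul_assoc]

theorem abs_diagonal_mulVec_transpose_mulVec_inv_mulVec_apply_le [LinearOrder K]
    [IsStrictOrderedRing K] (B : Matrix ι κ K) {w : κ → K} (hw : ∀ k, 0 ≤ w k) {D : K}
    (hD : ∀ g : ι → κ, |det (B.submatrix id g)| ≤ D)
    (hsq : ∀ g : ι → κ, |det (B.submatrix id g)| ≤ det (B.submatrix id g) ^ 2) (y : κ → K)
    (i : κ) :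
    |(diagonal w *ᵥ (Bᵀ *ᵥ ((B * diagonal w * Bᵀ)⁻¹ *ᵥ (B *ᵥ y)))) i| ≤ D * ∑ j, |y j| := by
  rw [diagonal_mulVec_transpose_mulVec_inv_mulVec_apply]
  have hD0 : 0 ≤ D := (abs_nonneg _).trans (hD fun _ => i)
  rcases (det_mul_diagonal_mul_transpose_nonneg B hw).eq_or_lt with hL | hL
  · rw [← hL]
    simpa using mul_nonneg hD0 (sum_nonneg fun j _ => abs_nonneg (y j))
  set L := B * diagonal w * Bᵀ
  calc |(det L)⁻¹ * ∑ j, w i * (Bᵀ * adjugate L * B) i j * y j|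
      ≤ (det L)⁻¹ * ∑ j, D * det L * |y j| := by
        rw [abs_mul, abs_of_pos (inv_pos.mpr hL)]
        refine mul_le_mul_of_nonneg_left ?_ (inv_pos.mpr hL).le
        refine (abs_sum_le_sum_abs _ _).trans (sum_le_sum fun j _ => ?_)
        rw [abs_mul]
        exact mul_le_mul_of_nonneg_right (abs_weighted_adjugate_le B hw hD hsq i j) (abs_nonneg _)
    _ = D * ∑ j, |y j| := by
        rw [← mul_sum]
        field_simp

end Field

end Matrix

theorem det_submatrix_rmat {m n k : ℕ} (A : Matrix (Fin m) (Fin n) ℤ) (f : Fin k → Fin m)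
    (g : Fin k → Fin n) : det ((rmat A).submatrix f g) = ((A.submatrix f g).det : ℝ) := by
  rw [rmat, submatrix_map, Int.cast_det]

theorem abs_det_submatrix_rmat_le_sq {m n k : ℕ} (A : Matrix (Fin m) (Fin n) ℤ)
    (f : Fin k → Fin m) (g : Fin k → Fin n) :
    |det ((rmat A).submatrix f g)| ≤ det ((rmat A).submatrix f g) ^ 2 := by
  have h := Int.natAbs_le_self_sq (A.submatrix f g).det
  rw [Int.natCast_natAbs] at h
  rw [det_submatrix_rmat]
  exact_mod_cast h

theorem abs_det_submatrix_rmat_le {m n : ℕ} {A : Matrix (Fin m) (Fin n) ℤ} {𝒟 : ℝ}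
    (hD : IsGreatest (subdets A) 𝒟) (g : Fin m → Fin n) :
    |det ((rmat A).submatrix id g)| ≤ 𝒟 := by
  by_cases hg : Function.Injective g
  · exact hD.2 ⟨m, id, g, Function.injective_id, hg, by rw [det_submatrix_rmat]⟩
  · obtain ⟨k, f, g', -, -, rfl⟩ := hD.1
    simp [det_submatrix_eq_zero_of_not_injective _ hg]

theorem q_bound_of_feasible_general {m n : ℕ} (A : Matrix (Fin m) (Fin n) ℤ)
    (𝒟 : ℝ) (hD : IsGreatest (subdets A) 𝒟)
    (b : Fin m → ℤ) (c : Fin n → ℤ) (hc : ∀ i, 0 < c i)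
    (y : Fin n → ℝ) (hyb : rmat A *ᵥ y = fun j => (b j : ℝ))
    (x : Fin n → ℝ) (hx : ∀ i, 0 < x i) :
    ∀ i, |physQ (rmat A) (fun j => (b j : ℝ)) (fun i => (c i : ℝ)) x i| ≤ 𝒟 * ∑ i, |y i| := by
  intro i
  have hw (k : Fin n) : 0 ≤ x k / c k := (div_pos (hx k) (by exact_mod_cast hc k)).le
  rw [← hyb]
  exact abs_diagonal_mulVec_transpose_mulVec_inv_mulVec_apply_le (rmat A) hw
    (abs_det_submatrix_rmat_le hD) (abs_det_submatrix_rmat_le_sq A id) y i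

theorem q_bound_of_feasible {m n : ℕ} (A : Matrix (Fin m) (Fin n) ℤ)
    (hrank : (rmat A).rank = m)
    (𝒟 : ℝ) (hD : IsGreatest (subdets A) 𝒟)
    (b : Fin m → ℤ) (c : Fin n → ℤ) (hc : ∀ i, 0 < c i)
    (y : Fin n → ℝ) (hyb : rmat A *ᵥ y = fun j => (b j : ℝ)) (hy : ∀ i, 0 ≤ y i)
    (x : Fin n → ℝ) (hx : ∀ i, 0 < x i) :
    ∀ i, |physQ (rmat A) (fun j => (b j : ℝ)) (fun i => (c i : ℝ)) x i| ≤ 𝒟 * ∑ i, |y i| :=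
  q_bound_of_feasible_general A 𝒟 hD b c hc y hyb x hx
end

section
/- Suppose x : [0,T) → ℝⁿ_{>0} is a solution of the Physarum dynamics ẋ = q − x for some finite T > 0, and the limit x(T) := lim_{t → T⁻} x(t) exists. Then x(T) is strictly positive, i.e., x(T) ∈ ℝⁿ_{>0}. -/
/-!
Along a trajectory, `d/dt log xⱼ = (qⱼ - xⱼ) / xⱼ`, and for every `v` the weighted sum
`∑ cⱼ vⱼ (qⱼ - xⱼ) / xⱼ` equals `(A v) ⬝ p - ∑ cⱼ vⱼ`. So if `v ≥ 0` and `(A v) ⬝ p` is bounded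
below on `[0, T)`, the Lyapunov function `∑ cⱼ vⱼ log xⱼ` is bounded below there; as the
trajectory is bounded above, every `xⱼ` with `vⱼ > 0` stays away from `0`.

For a feasible `y ≥ 0`, `(A y) ⬝ p = b ⬝ p ≥ 0` is the energy of `q`, so the support of `y`
survives at time `T`. Thomson's principle then bounds the energy, which bounds the potential
differences `(Aᵀ p)ⱼ` on the surviving coordinates. Finally `A x(t) - b = e⁻ᵗ (A x(0) - b)`,
so `A x(0)` is the image of a vector supported on the surviving coordinates. Taking for `v` the
part of `x(0)` on the coordinates that vanish at `T` makes `(A v) ⬝ p` bounded below, so these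
coordinates survive too: there are none.
-/

open Matrix Filter Set Topology

theorem isCompact_insert_image_Ico {E : Type*} [TopologicalSpace E] {f : ℝ → E} {a b : ℝ}
    {L : E} (hab : a ≤ b) (hf : ContinuousOn f (Ico a b))
    (hL : Tendsto f (𝓝[Ico a b] b) (𝓝 L)) :
    IsCompact (insert L (f '' Ico a b)) := by
  classical
  have hcont : ContinuousOn (Function.update f b L) (Icc a b) := by
    intro t ht
    rcases eq_or_ne t b with rfl | htb
    · rwa [continuousWithinAt_update_same, Icc_sdiff_right]
    · rw [continuousWithinAt_update_of_ne htb, ← Ico_insert_right hab, continuousWithinAt_insert]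
      exact hf t ⟨ht.1, ht.2.lt_of_ne htb⟩
  have himage : Function.update f b L '' Icc a b = insert L (f '' Ico a b) := by
    rw [← Ico_insert_right hab, image_insert_eq, Function.update_self]
    exact congrArg _ (image_congr fun t ht => Function.update_of_ne ht.2.ne _ _)
  exact himage ▸ isCompact_Icc.image_of_continuousOn hcont

theorem eq_exp_smul_of_hasDerivWithinAt_neg {E : Type*} [NormedAddCommGroup E]
    [NormedSpace ℝ E] {g : ℝ → E} {a b : ℝ} {L : E} (hab : a < b)
    (hg : ∀ t ∈ Ico a b, HasDerivWithinAt g (-g t) (Ico a b) t)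
    (hL : Tendsto g (𝓝[Ico a b] b) (𝓝 L)) :
    g a = Real.exp (b - a) • L := by
  set G : ℝ → E := fun t => Real.exp t • g t
  have hG : ∀ t ∈ Ico a b, HasDerivWithinAt G 0 (Ico a b) t := fun t ht => by
    simpa [G] using (Real.hasDerivAt_exp t).hasDerivWithinAt.fun_smul (hg t ht)
  have hconst : ∀ t ∈ Ico a b, G t = G a := fun t ht =>
    constant_of_has_deriv_right_zero
      (fun s hs => (hG s ⟨hs.1, hs.2.trans_lt ht.2⟩).continuousWithinAt.mono
        (Icc_subset_Ico_right ht.2))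
      (fun s hs => (hG s ⟨hs.1, hs.2.trans ht.2⟩).mono_of_mem_nhdsWithin
        (Ico_mem_nhdsGE_of_mem ⟨hs.1, hs.2.trans ht.2⟩))
      t ⟨ht.1, le_rfl⟩
  have hGL : Tendsto G (𝓝[Ico a b] b) (𝓝 (Real.exp b • L)) :=
    ((Real.continuous_exp.tendsto b).mono_left nhdsWithin_le_nhds).smul hL
  have := right_nhdsWithin_Ico_neBot hab
  have hGa : G a = Real.exp b • L := tendsto_nhds_unique
    (tendsto_const_nhds.congr' (eventually_nhdsWithin_of_forall fun t ht => (hconst t ht).symm))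
    hGL
  rw [Real.exp_sub, div_eq_inv_mul, mul_smul, ← hGa, smul_smul,
    inv_mul_cancel₀ (Real.exp_pos a).ne', one_smul]

theorem le_log_of_le_sum_mul_log {ι : Type*} [Fintype ι] {γ x X : ι → ℝ} {Φ : ℝ}
    (hγ : 0 ≤ γ) (hx : ∀ j, 0 < x j) (hxX : x ≤ X) (hΦ : Φ ≤ ∑ j, γ j * Real.log (x j))
    {j₀ : ι} (hj₀ : 0 < γ j₀) :
    Real.log (X j₀) + (Φ - ∑ j, γ j * Real.log (X j)) / γ j₀ ≤ Real.log (x j₀) := by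
  classical
  have hterm : ∀ j, γ j * (Real.log (x j) - Real.log (X j)) ≤ 0 := fun j =>
    mul_nonpos_of_nonneg_of_nonpos (hγ j) (sub_nonpos.mpr (Real.log_le_log (hx j) (hxX j)))
  have hsum : Φ - ∑ j, γ j * Real.log (X j)
      ≤ γ j₀ * (Real.log (x j₀) - Real.log (X j₀)) := by
    calc Φ - ∑ j, γ j * Real.log (X j)
        ≤ ∑ j, γ j * (Real.log (x j) - Real.log (X j)) := by
          simp only [mul_sub, Finset.sum_sub_distrib]; linarith
      _ ≤ γ j₀ * (Real.log (x j₀) - Real.log (X j₀)) := by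
          rw [← Finset.add_sum_erase _ _ (Finset.mem_univ j₀)]
          linarith [Finset.sum_nonpos fun j (_ : j ∈ Finset.univ.erase j₀) => hterm j]
  rw [← le_sub_iff_add_le', div_le_iff₀' hj₀]
  exact hsum

theorem Matrix.vecMul_injective_of_rank_eq {m n : ℕ} {B : Matrix (Fin m) (Fin n) ℝ}
    (hrank : B.rank = m) : Function.Injective B.vecMul :=
  vecMul_injective_iff.mpr <| linearIndependent_iff_card_eq_finrank_span.mpr <| by
    rw [Fintype.card_fin, Set.finrank, ← rank_eq_finrank_span_row, hrank]

/-- The potential vector `p = L⁻¹ b`, so that `physQ = W Bᵀ p`. -/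
noncomputable def physP {m n : ℕ} (B : Matrix (Fin m) (Fin n) ℝ) (b : Fin m → ℝ)
    (c x : Fin n → ℝ) : Fin m → ℝ :=
  (B * physW c x * Bᵀ)⁻¹ *ᵥ b

section Algebra

variable {m n : ℕ} (B : Matrix (Fin m) (Fin n) ℝ) (b : Fin m → ℝ) (c x : Fin n → ℝ)

theorem physW_mulVec (v : Fin n → ℝ) : physW c x *ᵥ v = fun j => x j / c j * v j := by
  ext j
  simp [physW, mulVec_diagonal]

theorem physQ_apply (j : Fin n) :
    physQ B b c x j = x j / c j * (Bᵀ *ᵥ physP B b c x) j := by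
  rw [physQ, physW_mulVec]; rfl

theorem dotProduct_physL_mulVec (v : Fin m → ℝ) :
    v ⬝ᵥ (B * physW c x * Bᵀ) *ᵥ v = ∑ j, x j / c j * (Bᵀ *ᵥ v) j ^ 2 := by
  rw [← mulVec_mulVec, ← mulVec_mulVec, dotProduct_mulVec, ← mulVec_transpose, physW_mulVec]
  exact Finset.sum_congr rfl fun j _ => by ring

theorem mulVec_dotProduct_physP (v : Fin n → ℝ) :
    (B *ᵥ v) ⬝ᵥ physP B b c x = v ⬝ᵥ (Bᵀ *ᵥ physP B b c x) := by
  rw [dotProduct_comm, dotProduct_mulVec, mulVec_transpose, dotProduct_comm]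

theorem isUnit_det_physL {B : Matrix (Fin m) (Fin n) ℝ} {c x : Fin n → ℝ} (hrank : B.rank = m)
    (hc : ∀ j, 0 < c j) (hx : ∀ j, 0 < x j) : IsUnit (B * physW c x * Bᵀ).det := by
  rw [isUnit_iff_ne_zero]
  intro hdet
  obtain ⟨v, hv0, hv⟩ := exists_mulVec_eq_zero_iff.mpr hdet
  have hsum : ∑ j, x j / c j * (Bᵀ *ᵥ v) j ^ 2 = 0 := by
    rw [← dotProduct_physL_mulVec, hv, dotProduct_zero]
  have hBv : Bᵀ *ᵥ v = 0 := funext fun j => by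
    have := (Finset.sum_eq_zero_iff_of_nonneg fun k _ =>
      mul_nonneg (div_pos (hx k) (hc k)).le (sq_nonneg _)).mp hsum j (Finset.mem_univ j)
    simpa [(div_pos (hx j) (hc j)).ne'] using this
  exact hv0 (vecMul_injective_of_rank_eq hrank 
    (show v ᵥ* B = 0 ᵥ* B by rw [← mulVec_transpose, hBv, zero_vecMul]))

theorem physL_mulVec_physP (hL : IsUnit (B * physW c x * Bᵀ).det) :
    (B * physW c x * Bᵀ) *ᵥ physP B b c x = b := by
  rw [physP, mulVec_mulVec, mul_nonsing_inv _ hL, one_mulVec]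

theorem mulVec_physQ (hL : IsUnit (B * physW c x * Bᵀ).det) : B *ᵥ physQ B b c x = b := by
  calc B *ᵥ physQ B b c x = (B * physW c x * Bᵀ) *ᵥ physP B b c x := by
        simp only [physQ, physP, mulVec_mulVec, Matrix.mul_assoc]
    _ = b := physL_mulVec_physP B b c x hL

theorem dotProduct_physP_eq_sum (hL : IsUnit (B * physW c x * Bᵀ).det) :
    b ⬝ᵥ physP B b c x = ∑ j, x j / c j * (Bᵀ *ᵥ physP B b c x) j ^ 2 := by
  rw [← dotProduct_physL_mulVec, physL_mulVec_physP B b c x hL, dotProduct_comm]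

theorem mul_sq_le_dotProduct_physP (hL : IsUnit (B * physW c x * Bᵀ).det)
    (hc : ∀ j, 0 < c j) (hx : ∀ j, 0 < x j) (j : Fin n) :
    x j / c j * (Bᵀ *ᵥ physP B b c x) j ^ 2 ≤ b ⬝ᵥ physP B b c x := by
  rw [dotProduct_physP_eq_sum B b c x hL]
  exact Finset.single_le_sum (fun k _ => mul_nonneg (div_pos (hx k) (hc k)).le (sq_nonneg _))
    (Finset.mem_univ j)

theorem dotProduct_physP_nonneg (hL : IsUnit (B * physW c x * Bᵀ).det)
    (hc : ∀ j, 0 < c j) (hx : ∀ j, 0 < x j) : 0 ≤ b ⬝ᵥ physP B b c x := by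
  rw [dotProduct_physP_eq_sum B b c x hL]
  exact Finset.sum_nonneg fun k _ => mul_nonneg (div_pos (hx k) (hc k)).le (sq_nonneg _)

/-- Thomson's principle: `q` minimizes the energy `∑ c z² / x` among all `z` with `B z = b`,
and its energy is `b ⬝ p`. -/
theorem dotProduct_physP_le (hL : IsUnit (B * physW c x * Bᵀ).det) (hc : ∀ j, 0 < c j)
    (hx : ∀ j, 0 < x j) {z : Fin n → ℝ} (hz : B *ᵥ z = b) :
    b ⬝ᵥ physP B b c x ≤ ∑ j, c j * z j ^ 2 / x j := by
  set u := Bᵀ *ᵥ physP B b c x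
  set d := z - physQ B b c x
  have hdu : ∑ j, d j * u j = 0 := by
    rw [← dotProduct, ← mulVec_dotProduct_physP, mulVec_sub, hz, mulVec_physQ B b c x hL,
      sub_self, zero_dotProduct]
  have hsplit : ∀ j, c j * z j ^ 2 / x j
      = x j / c j * u j ^ 2 + 2 * (d j * u j) + c j / x j * d j ^ 2 := fun j => by
    have hz : z j = x j / c j * u j + d j := by simp [d, physQ_apply, u]
    rw [hz]
    field_simp [(hc j).ne', (hx j).ne']
    ring
  calc b ⬝ᵥ physP B b c x = ∑ j, x j / c j * u j ^ 2 := dotProduct_physP_eq_sum B b c x hL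
    _ ≤ ∑ j, (x j / c j * u j ^ 2 + c j / x j * d j ^ 2) :=
        Finset.sum_le_sum fun j _ => le_add_of_nonneg_right
          (mul_nonneg (div_pos (hc j) (hx j)).le (sq_nonneg _))
    _ = ∑ j, c j * z j ^ 2 / x j := by
        simp only [hsplit, Finset.sum_add_distrib, ← Finset.mul_sum, hdu]
        ring

theorem sum_mul_physQ_sub_div (hc : ∀ j, 0 < c j) (hx : ∀ j, 0 < x j) (v : Fin n → ℝ) :
    ∑ j, c j * v j * ((physQ B b c x j - x j) / x j)
      = (B *ᵥ v) ⬝ᵥ physP B b c x - ∑ j, c j * v j := by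
  rw [mulVec_dotProduct_physP, dotProduct, ← Finset.sum_sub_distrib]
  refine Finset.sum_congr rfl fun j _ => ?_
  rw [physQ_apply]
  field_simp [(hc j).ne', (hx j).ne']

end Algebra

section Trajectory

variable {m n : ℕ} {B : Matrix (Fin m) (Fin n) ℝ} {b : Fin m → ℝ} {c : Fin n → ℝ}
  {x : ℝ → Fin n → ℝ} {s : Set ℝ}

theorem IsPhysSolOn.hasDerivWithinAt_apply (hsol : IsPhysSolOn B b c x s) {t : ℝ} (ht : t ∈ s)
    (j : Fin n) : HasDerivWithinAt (fun r => x r j) (physQ B b c (x t) j - x t j) s t :=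
  hasDerivWithinAt_pi.mp (hsol t ht).2 j

theorem IsPhysSolOn.continuousOn (hsol : IsPhysSolOn B b c x s) : ContinuousOn x s :=
  fun t ht => (hsol t ht).2.continuousWithinAt

theorem IsPhysSolOn.isUnit_det (hsol : IsPhysSolOn B b c x s) (hrank : B.rank = m)
    (hc : ∀ j, 0 < c j) {t : ℝ} (ht : t ∈ s) : IsUnit (B * physW c (x t) * Bᵀ).det :=
  isUnit_det_physL hrank hc (hsol t ht).1

theorem IsPhysSolOn.hasDerivWithinAt_mulVec_sub (hsol : IsPhysSolOn B b c x s)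
    (hrank : B.rank = m) (hc : ∀ j, 0 < c j) {t : ℝ} (ht : t ∈ s) :
    HasDerivWithinAt (fun r => B *ᵥ x r - b) (-(B *ᵥ x t - b)) s t := by
  have hB : HasDerivWithinAt (fun r => B *ᵥ x r) (B *ᵥ (physQ B b c (x t) - x t)) s t :=
    (LinearMap.toContinuousLinearMap B.mulVecLin).hasFDerivAt.comp_hasDerivWithinAt t (hsol t ht).2
  refine (hB.sub_const b).congr_deriv ?_
  rw [mulVec_sub, mulVec_physQ B b c (x t) (hsol.isUnit_det hrank hc ht), neg_sub]

variable {T : ℝ} {xT : Fin n → ℝ}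

theorem IsPhysSolOn.exists_le_of_tendsto (hsol : IsPhysSolOn B b c x (Ico 0 T)) (hT : 0 ≤ T)
    (hlim : Tendsto x (𝓝[Ico 0 T] T) (𝓝 xT)) : ∃ X, ∀ t ∈ Ico 0 T, x t ≤ X := by
  obtain ⟨X, hX⟩ := (isCompact_insert_image_Ico hT hsol.continuousOn hlim).isBounded.bddAbove
  exact ⟨X, fun t ht => hX (mem_insert_of_mem _ (mem_image_of_mem x ht))⟩

theorem IsPhysSolOn.exists_pos_le_of_tendsto (hsol : IsPhysSolOn B b c x (Ico 0 T))
    (hT : 0 ≤ T) (hlim : Tendsto x (𝓝[Ico 0 T] T) (𝓝 xT)) {j : Fin n} (hj : 0 < xT j) :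
    ∃ ε > 0, ∀ t ∈ Ico 0 T, ε ≤ x t j := by
  obtain ⟨z, hzK, hz⟩ := (isCompact_insert_image_Ico hT hsol.continuousOn hlim).exists_isMinOn
    (insert_nonempty _ _) (continuous_apply j).continuousOn
  refine ⟨z j, ?_, fun t ht => hz (mem_insert_of_mem _ (mem_image_of_mem x ht))⟩
  rcases hzK with rfl | ⟨t, ht, rfl⟩
  exacts [hj, (hsol t ht).1 j]

theorem IsPhysSolOn.nonneg_of_tendsto (hsol : IsPhysSolOn B b c x (Ico 0 T)) (hT : 0 < T)
    (hlim : Tendsto x (𝓝[Ico 0 T] T) (𝓝 xT)) (j : Fin n) : 0 ≤ xT j :=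
  have := right_nhdsWithin_Ico_neBot hT
  ge_of_tendsto (tendsto_pi_nhds.mp hlim j)
    (eventually_nhdsWithin_of_forall fun t ht => ((hsol t ht).1 j).le)

theorem IsPhysSolOn.mulVec_apply_zero (hsol : IsPhysSolOn B b c x (Ico 0 T))
    (hrank : B.rank = m) (hc : ∀ j, 0 < c j) (hT : 0 < T)
    (hlim : Tendsto x (𝓝[Ico 0 T] T) (𝓝 xT)) :
    B *ᵥ x 0 = b + Real.exp T • (B *ᵥ xT - b) := by
  have hdecay : B *ᵥ x 0 - b = Real.exp (T - 0) • (B *ᵥ xT - b) :=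
    eq_exp_smul_of_hasDerivWithinAt_neg hT
      (fun t ht => hsol.hasDerivWithinAt_mulVec_sub hrank hc ht)
      (((continuous_const.matrix_mulVec continuous_id).tendsto xT).comp hlim |>.sub_const b)
  rw [sub_zero] at hdecay
  rw [← hdecay]
  abel

theorem IsPhysSolOn.exists_le_sum_mul_log (hsol : IsPhysSolOn B b c x (Ico 0 T))
    (hc : ∀ j, 0 < c j) (hT : 0 < T) {v : Fin n → ℝ} (hv : 0 ≤ v)
    {K : ℝ} (hK : ∀ t ∈ Ico 0 T, -K ≤ (B *ᵥ v) ⬝ᵥ physP B b c (x t)) :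
    ∃ Φ, ∀ t ∈ Ico 0 T, Φ ≤ ∑ j, c j * v j * Real.log (x t j) := by
  set φ : ℝ → ℝ := fun t => ∑ j, c j * v j * Real.log (x t j)
  set C := |K| + ∑ j, c j * v j
  have hC : 0 ≤ C := add_nonneg (abs_nonneg K)
    (Finset.sum_nonneg fun j _ => mul_nonneg (hc j).le (hv j))
  have hφ : ∀ t ∈ Ico 0 T, HasDerivWithinAt φ
      ((B *ᵥ v) ⬝ᵥ physP B b c (x t) - ∑ j, c j * v j) (Ico 0 T) t := fun t ht => by
    rw [← sum_mul_physQ_sub_div B b c (x t) hc (hsol t ht).1]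
    exact HasDerivWithinAt.fun_sum fun j _ =>
      ((hsol.hasDerivWithinAt_apply ht j).log ((hsol t ht).1 j).ne').const_mul _
  have hφ' : ∀ t ∈ interior (Ico 0 T), HasDerivAt φ
      ((B *ᵥ v) ⬝ᵥ physP B b c (x t) - ∑ j, c j * v j) t := fun t ht =>
    (hφ t (interior_subset ht)).hasDerivAt (mem_interior_iff_mem_nhds.mp ht)
  have hgrowth := (convex_Ico 0 T).mul_sub_le_image_sub_of_le_deriv (C := -C)
    (fun t ht => (hφ t ht).continuousWithinAt)
    (fun t ht => (hφ' t ht).differentiableAt.differentiableWithinAt)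
    (fun t ht => by
      rw [(hφ' t ht).deriv]
      linarith [hK t (interior_subset ht), le_abs_self K])
  refine ⟨φ 0 - C * T, fun t ht => ?_⟩
  have := hgrowth 0 ⟨le_rfl, hT⟩ t ht ht.1
  nlinarith [ht.2]

theorem IsPhysSolOn.pos_of_tendsto_of_neg_le (hsol : IsPhysSolOn B b c x (Ico 0 T))
    (hc : ∀ j, 0 < c j) (hT : 0 < T)
    (hlim : Tendsto x (𝓝[Ico 0 T] T) (𝓝 xT)) {v : Fin n → ℝ} (hv : 0 ≤ v)
    {K : ℝ} (hK : ∀ t ∈ Ico 0 T, -K ≤ (B *ᵥ v) ⬝ᵥ physP B b c (x t))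
    {j₀ : Fin n} (hj₀ : 0 < v j₀) : 0 < xT j₀ := by
  obtain ⟨Φ, hΦ⟩ := hsol.exists_le_sum_mul_log hc hT hv hK
  obtain ⟨X, hX⟩ := hsol.exists_le_of_tendsto hT.le hlim
  set δ := Real.exp (Real.log (X j₀)
    + (Φ - ∑ j, c j * v j * Real.log (X j)) / (c j₀ * v j₀))
  have hδ : ∀ t ∈ Ico 0 T, δ ≤ x t j₀ := fun t ht => by
    rw [← Real.exp_log ((hsol t ht).1 j₀)]
    exact Real.exp_le_exp.mpr <| le_log_of_le_sum_mul_log (γ := fun j => c j * v j)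
      (fun j => mul_nonneg (hc j).le (hv j)) (hsol t ht).1 (hX t ht) (hΦ t ht)
      (mul_pos (hc j₀) hj₀)
  have := right_nhdsWithin_Ico_neBot hT
  exact (Real.exp_pos _).trans_le
    (ge_of_tendsto (tendsto_pi_nhds.mp hlim j₀) (eventually_nhdsWithin_of_forall hδ))

theorem IsPhysSolOn.pos_of_feasible (hsol : IsPhysSolOn B b c x (Ico 0 T))
    (hrank : B.rank = m) (hc : ∀ j, 0 < c j) (hT : 0 < T)
    (hlim : Tendsto x (𝓝[Ico 0 T] T) (𝓝 xT)) {y : Fin n → ℝ} (hy : B *ᵥ y = b) (hy0 : 0 ≤ y)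
    {j : Fin n} (hj : 0 < y j) : 0 < xT j :=
  hsol.pos_of_tendsto_of_neg_le hc hT hlim hy0 (K := 0) (fun t ht => by
    rw [neg_zero, hy]
    exact dotProduct_physP_nonneg B b c (x t) (hsol.isUnit_det hrank hc ht) hc (hsol t ht).1) hj

theorem IsPhysSolOn.exists_dotProduct_physP_le (hsol : IsPhysSolOn B b c x (Ico 0 T))
    (hrank : B.rank = m) (hc : ∀ j, 0 < c j)
    (hfeas : ∃ y : Fin n → ℝ, B *ᵥ y = b ∧ ∀ i, 0 ≤ y i) (hT : 0 < T)
    (hlim : Tendsto x (𝓝[Ico 0 T] T) (𝓝 xT)) :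
    ∃ C, ∀ t ∈ Ico 0 T, b ⬝ᵥ physP B b c (x t) ≤ C := by
  obtain ⟨y, hy, hy0⟩ := hfeas
  have hterm : ∀ j, ∃ C, ∀ t ∈ Ico 0 T, c j * y j ^ 2 / x t j ≤ C := by
    intro j
    rcases (hy0 j).eq_or_lt with hyj | hyj
    · exact ⟨0, fun t _ => by simp [← hyj]⟩
    · obtain ⟨ε, hε, hεx⟩ := hsol.exists_pos_le_of_tendsto hT.le hlim
        (hsol.pos_of_feasible hrank hc hT hlim hy hy0 hyj)
      exact ⟨c j * y j ^ 2 / ε, fun t ht =>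
        div_le_div_of_nonneg_left (by positivity [(hc j).le]) hε (hεx t ht)⟩
  choose C hC using hterm
  exact ⟨∑ j, C j, fun t ht =>
    (dotProduct_physP_le B b c (x t) (hsol.isUnit_det hrank hc ht) hc (hsol t ht).1 hy).trans
      (Finset.sum_le_sum fun j _ => hC j t ht)⟩

theorem IsPhysSolOn.exists_sq_le (hsol : IsPhysSolOn B b c x (Ico 0 T))
    (hrank : B.rank = m) (hc : ∀ j, 0 < c j)
    (hfeas : ∃ y : Fin n → ℝ, B *ᵥ y = b ∧ ∀ i, 0 ≤ y i) (hT : 0 < T)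
    (hlim : Tendsto x (𝓝[Ico 0 T] T) (𝓝 xT)) {j : Fin n} (hj : 0 < xT j) :
    ∃ M, ∀ t ∈ Ico 0 T, (Bᵀ *ᵥ physP B b c (x t)) j ^ 2 ≤ M := by
  obtain ⟨C, hC⟩ := hsol.exists_dotProduct_physP_le hrank hc hfeas hT hlim
  obtain ⟨ε, hε, hεx⟩ := hsol.exists_pos_le_of_tendsto hT.le hlim hj
  refine ⟨c j * C / ε, fun t ht => ?_⟩
  have hE := (mul_sq_le_dotProduct_physP B b c (x t) (hsol.isUnit_det hrank hc ht) hc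
    (hsol t ht).1 j).trans (hC t ht)
  rw [div_mul_eq_mul_div, div_le_iff₀ (hc j)] at hE
  rw [le_div_iff₀ hε]
  nlinarith [hεx t ht, sq_nonneg ((Bᵀ *ᵥ physP B b c (x t)) j)]

theorem IsPhysSolOn.exists_neg_le_mulVec_dotProduct_physP (hsol : IsPhysSolOn B b c x (Ico 0 T))
    (hrank : B.rank = m) (hc : ∀ j, 0 < c j)
    (hfeas : ∃ y : Fin n → ℝ, B *ᵥ y = b ∧ ∀ i, 0 ≤ y i) (hT : 0 < T)
    (hlim : Tendsto x (𝓝[Ico 0 T] T) (𝓝 xT)) {w : Fin n → ℝ} (hw : ∀ j, w j ≠ 0 → 0 < xT j) :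
    ∃ K, ∀ t ∈ Ico 0 T, -K ≤ (B *ᵥ w) ⬝ᵥ physP B b c (x t) := by
  have hterm : ∀ j, ∃ K, ∀ t ∈ Ico 0 T, -K ≤ w j * (Bᵀ *ᵥ physP B b c (x t)) j := by
    intro j
    by_cases hwj : w j = 0
    · exact ⟨0, fun t _ => by simp [hwj]⟩
    · obtain ⟨M, hM⟩ := hsol.exists_sq_le hrank hc hfeas hT hlim (hw j hwj)
      exact ⟨(w j ^ 2 + M) / 2, fun t ht => by
        nlinarith [hM t ht, sq_nonneg (w j + (Bᵀ *ᵥ physP B b c (x t)) j)]⟩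
  choose K hK using hterm
  refine ⟨∑ j, K j, fun t ht => ?_⟩
  rw [mulVec_dotProduct_physP, dotProduct, ← Finset.sum_neg_distrib]
  exact Finset.sum_le_sum fun j _ => hK j t ht

theorem IsPhysSolOn.pos_of_tendsto (hsol : IsPhysSolOn B b c x (Ico 0 T))
    (hrank : B.rank = m) (hc : ∀ j, 0 < c j)
    (hfeas : ∃ y : Fin n → ℝ, B *ᵥ y = b ∧ ∀ i, 0 ≤ y i) (hT : 0 < T)
    (hlim : Tendsto x (𝓝[Ico 0 T] T) (𝓝 xT)) (i : Fin n) : 0 < xT i := by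
  obtain ⟨y, hy, hy0⟩ := hfeas
  by_contra hi
  set v : Fin n → ℝ := fun j => if 0 < xT j then 0 else x 0 j
  set w : Fin n → ℝ := (1 - Real.exp T) • y + Real.exp T • xT - (x 0 - v)
  have hw : ∀ j, w j ≠ 0 → 0 < xT j := fun j hwj => by
    by_contra hj
    have hyj : y j = 0 :=
      (hy0 j).antisymm' (not_lt.mp (mt (hsol.pos_of_feasible hrank hc hT hlim hy hy0) hj))
    have hxTj : xT j = 0 := (not_lt.mp hj).antisymm (hsol.nonneg_of_tendsto hT hlim j)
    exact hwj (by simp [w, v, hyj, hxTj])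
  have hBv : B *ᵥ v = B *ᵥ w := by
    simp only [w, mulVec_sub, mulVec_add, mulVec_smul, hy,
      hsol.mulVec_apply_zero hrank hc hT hlim]
    module
  obtain ⟨K, hK⟩ := hsol.exists_neg_le_mulVec_dotProduct_physP hrank hc ⟨y, hy, hy0⟩ hT hlim hw
  have hv : 0 ≤ v := fun j => by
    by_cases hj : 0 < xT j
    · simp [v, hj]
    · simpa [v, hj] using ((hsol 0 ⟨le_rfl, hT⟩).1 j).le
  exact hi (hsol.pos_of_tendsto_of_neg_le hc hT hlim hv (hBv ▸ hK)
    (by simpa [v, hi] using (hsol 0 ⟨le_rfl, hT⟩).1 i))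

end Trajectory

theorem physarum_limit_positive {m n : ℕ} (A : Matrix (Fin m) (Fin n) ℤ)
    (hrank : (rmat A).rank = m)
    (b : Fin m → ℤ) (c : Fin n → ℤ) (hc : ∀ i, 0 < c i)
    (hfeas : ∃ y : Fin n → ℝ, (rmat A *ᵥ y = fun j => (b j : ℝ)) ∧ ∀ i, 0 ≤ y i)
    (T : ℝ) (hT : 0 < T) (x : ℝ → Fin n → ℝ)
    (hsol : IsPhysSolOn (rmat A) (fun j => (b j : ℝ)) (fun i => (c i : ℝ)) x (Set.Ico 0 T))
    (xT : Fin n → ℝ)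
    (hlim : Filter.Tendsto x (nhdsWithin T (Set.Ico 0 T)) (nhds xT)) :
    ∀ i, 0 < xT i :=
  hsol.pos_of_tendsto hrank (fun i => Int.cast_pos.mpr (hc i)) hfeas hT hlim
end
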